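/- arXiv:1701.08687 — 2 statements merged into one kernel-verified Lean document; each statement's English description precedes it below -/
import Mathlib

section
/- Neyman orthogonality of the AIPW ATE score with respect to the outcome regression: for any square-integrable direction h(d,z), the Gateaux derivative at t = 0 of t ↦ E[ ((g₀+th)(1,Z) − (g₀+th)(0,Z)) + D(Y − (g₀+th)(1,Z))/m₀(Z) − (1−D)(Y − (g₀+th)(0,Z))/(1−m₀(Z)) − θ₀ ] equals 0. -/
/-!
Perturbing the outcome regression by `t h` changes the score by `t δ`, where
`δ = h₁(Z) - h₀(Z) - D h₁(Z) / m₀(Z) + (1 - D) h₀(Z) / (1 - m₀(Z))`.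
Pulling the `σ(Z)`-measurable weights out of `E[· ∣ Z]` turns `E[D h₁(Z) / m₀(Z)]` into
`E[h₁(Z)]` and `E[(1 - D) h₀(Z) / (1 - m₀(Z))]` into `E[h₀(Z)]`, so `E[δ] = 0` and the
expected score does not depend on `t` at all.
-/

open MeasureTheory

section

variable {Ω 𝓩 : Type*} {m mΩ : MeasurableSpace Ω} {μ : Measure Ω}

theorem integral_mul_eq_integral_mul_condExp (hm : m ≤ mΩ) [SigmaFinite (μ.trim hm)]
    {f g : Ω → ℝ} (hf : StronglyMeasurable[m] f) (hfg : Integrable (f * g) μ)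
    (hg : Integrable g μ) :
    ∫ ω, f ω * g ω ∂μ = ∫ ω, f ω * μ[g | m] ω ∂μ := by
  rw [← integral_condExp hm]
  exact integral_congr_ae (condExp_mul_of_stronglyMeasurable_left hf hfg hg)

theorem condExp_const_sub_ae_eq [IsFiniteMeasure μ] (hm : m ≤ mΩ) (c : ℝ) {f : Ω → ℝ}
    (hf : Integrable f μ) : μ[fun ω => c - f ω | m] =ᵐ[μ] fun ω => c - μ[f | m] ω := by
  have h := condExp_sub (integrable_const c) hf m
  rw [condExp_const hm] at h
  exact h

theorem integrable_mul_div_of_norm_le {f g q : Ω → ℝ} {C ε : ℝ} (hε : 0 < ε)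
    (hf : AEStronglyMeasurable f μ) (hfC : ∀ᵐ ω ∂μ, ‖f ω‖ ≤ C)
    (hq : AEStronglyMeasurable q μ) (hqε : ∀ᵐ ω ∂μ, ε ≤ q ω) (hg : Integrable g μ) :
    Integrable (fun ω => f ω * g ω / q ω) μ := by
  have hbdd : Integrable (fun ω => f ω / q ω * g ω) μ := by
    refine hg.bdd_mul (c := C / ε) (hf.div₀ hq) ?_
    filter_upwards [hfC, hqε] with ω hfω hqω
    rw [norm_div, Real.norm_of_nonneg (hε.trans_le hqω).le]
    exact div_le_div₀ ((norm_nonneg _).trans hfω) hfω hε hqω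
  exact hbdd.congr (.of_forall fun ω => div_mul_eq_mul_div _ _ _)

theorem hasDerivAt_integral_add_mul {f g : Ω → ℝ} (hf : Integrable f μ) (hg : Integrable g μ)
    (x : ℝ) : HasDerivAt (fun t => ∫ ω, (f ω + t * g ω) ∂μ) (∫ ω, g ω ∂μ) x := by
  have hlin : (fun t => ∫ ω, (f ω + t * g ω) ∂μ)
      = fun t => ∫ ω, f ω ∂μ + t * ∫ ω, g ω ∂μ := by
    funext t
    rw [integral_add hf (hg.const_mul t), integral_const_mul]
  rw [hlin]
  simpa using ((hasDerivAt_id x).mul_const (∫ ω, g ω ∂μ)).const_add (∫ ω, f ω ∂μ)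

theorem integral_mul_div_propensity [MeasurableSpace 𝓩] [IsFiniteMeasure μ]
    {D : Ω → ℝ} {Z : Ω → 𝓩} {h p : 𝓩 → ℝ} {C ε : ℝ} (hε : 0 < ε)
    (hZ : Measurable Z) (hh : Measurable h) (hp : Measurable p)
    (hD : AEStronglyMeasurable D μ) (hDC : ∀ᵐ ω ∂μ, ‖D ω‖ ≤ C)
    (hpε : ∀ᵐ ω ∂μ, ε ≤ p (Z ω))
    (hcond : μ[D | MeasurableSpace.comap Z inferInstance] =ᵐ[μ] fun ω => p (Z ω))
    (hhZ : Integrable (fun ω => h (Z ω)) μ) :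
    ∫ ω, D ω * h (Z ω) / p (Z ω) ∂μ = ∫ ω, h (Z ω) ∂μ := by
  have hint := integrable_mul_div_of_norm_le (q := fun ω => p (Z ω)) hε hD hDC
    (hp.comp hZ).aestronglyMeasurable hpε hhZ
  have hweight : StronglyMeasurable[MeasurableSpace.comap Z inferInstance]
      (fun ω => h (Z ω) / p (Z ω)) :=
    ((hh.div hp).comp (comap_measurable Z)).stronglyMeasurable
  calc ∫ ω, D ω * h (Z ω) / p (Z ω) ∂μ
      = ∫ ω, h (Z ω) / p (Z ω) * D ω ∂μ := by congr 1; ext ω; ring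
    _ = ∫ ω, h (Z ω) / p (Z ω) * p (Z ω) ∂μ := by
        rw [integral_mul_eq_integral_mul_condExp hZ.comap_le hweight
          (hint.congr (.of_forall fun ω => by simp only [Pi.mul_apply]; ring))
          (.of_bound hD C hDC)]
        exact integral_congr_ae ((ae_eq_refl (fun ω => h (Z ω) / p (Z ω))).mul hcond)
    _ = ∫ ω, h (Z ω) ∂μ := integral_congr_ae <| hpε.mono fun ω hω => by
        field_simp [(hε.trans_le hω).ne']

end

theorem statement6_general {Ω 𝓩 : Type*} [MeasurableSpace Ω] [MeasurableSpace 𝓩]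
    (μ : Measure Ω) [IsProbabilityMeasure μ]
    (Y D : Ω → ℝ) (Z : Ω → 𝓩) (g0 g1 h0 h1 m0 : 𝓩 → ℝ) (ε : ℝ) (hε : 0 < ε)
    (hD : Measurable D) (hZ : Measurable Z)
    (hm0 : Measurable m0)
    (hh0 : Measurable h0) (hh1 : Measurable h1)
    (hDbin : ∀ ω, D ω = 0 ∨ D ω = 1)
    -- `m₀(Z) = E[D ∣ Z]`:
    (hm : μ[D | MeasurableSpace.comap Z inferInstance] =ᵐ[μ] fun ω => m0 (Z ω))
    (hover : ∀ᵐ ω ∂μ, ε ≤ m0 (Z ω) ∧ m0 (Z ω) ≤ 1 - ε)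
    -- square-integrable directions and moments:
    (hh0L2 : MemLp (fun ω => h0 (Z ω)) 2 μ)
    (hh1L2 : MemLp (fun ω => h1 (Z ω)) 2 μ)
    -- integrability of the score along the path:
    (hint : ∀ t : ℝ, Integrable (fun ω =>
        ((g1 (Z ω) + t * h1 (Z ω)) - (g0 (Z ω) + t * h0 (Z ω)))
        + D ω * (Y ω - (g1 (Z ω) + t * h1 (Z ω))) / m0 (Z ω)
        - (1 - D ω) * (Y ω - (g0 (Z ω) + t * h0 (Z ω))) / (1 - m0 (Z ω))) μ) :
    HasDerivAt (fun t : ℝ => ∫ ω,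
        (((g1 (Z ω) + t * h1 (Z ω)) - (g0 (Z ω) + t * h0 (Z ω)))
        + D ω * (Y ω - (g1 (Z ω) + t * h1 (Z ω))) / m0 (Z ω)
        - (1 - D ω) * (Y ω - (g0 (Z ω) + t * h0 (Z ω))) / (1 - m0 (Z ω))
        - (∫ ω', (g1 (Z ω') - g0 (Z ω')) ∂μ)) ∂μ) 0 0 := by
  have hDC : ∀ᵐ ω ∂μ, ‖D ω‖ ≤ 1 :=
    .of_forall fun ω => by rcases hDbin ω with h | h <;> simp [h]
  have hD'C : ∀ᵐ ω ∂μ, ‖1 - D ω‖ ≤ 1 :=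
    .of_forall fun ω => by rcases hDbin ω with h | h <;> simp [h]
  have hm0ε : ∀ᵐ ω ∂μ, ε ≤ m0 (Z ω) := hover.mono fun ω hω => hω.1
  have hm0ε' : ∀ᵐ ω ∂μ, ε ≤ 1 - m0 (Z ω) :=
    hover.mono fun ω hω => by linarith [hω.2]
  have hD' : AEStronglyMeasurable (fun ω => 1 - D ω) μ :=
    (measurable_const.sub hD).aestronglyMeasurable
  have hm' := (condExp_const_sub_ae_eq hZ.comap_le 1
    (.of_bound hD.aestronglyMeasurable 1 hDC)).trans (hm.fun_comp (1 - ·))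
  have hh1Z := hh1L2.integrable one_le_two
  have hh0Z := hh0L2.integrable one_le_two
  have hw1 := integrable_mul_div_of_norm_le (q := fun ω => m0 (Z ω)) hε
    hD.aestronglyMeasurable hDC (hm0.comp hZ).aestronglyMeasurable hm0ε hh1Z
  have hw0 := integrable_mul_div_of_norm_le (q := fun ω => 1 - m0 (Z ω)) hε hD' hD'C
    (measurable_const.sub (hm0.comp hZ)).aestronglyMeasurable hm0ε' hh0Z
  have hψ0 := (hint 0).sub' (integrable_const (∫ ω', (g1 (Z ω') - g0 (Z ω')) ∂μ))
  convert hasDerivAt_integral_add_mul hψ0 ((hh1Z.sub' hw1).sub' (hh0Z.sub' hw0)) 0 using 1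
  · funext t
    congr 1 with ω
    ring
  · rw [integral_sub (hh1Z.sub' hw1) (hh0Z.sub' hw0), integral_sub hh1Z hw1,
      integral_sub hh0Z hw0,
      integral_mul_div_propensity hε hZ hh1 hm0 hD.aestronglyMeasurable hDC hm0ε hm hh1Z,
      integral_mul_div_propensity (p := fun z => 1 - m0 z) hε hZ hh0 (measurable_const.sub hm0)
        hD' hD'C hm0ε' hm' hh0Z]
    ring

/-- Neyman orthogonality of the AIPW ATE score with respect to the outcome regression:
for any square-integrable direction `h(d,z)`, the Gateaux derivative at `t = 0` of the map
`t ↦ E[ψ(W; θ₀, (g₀ + t h, m₀))]` is zero. -/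
theorem statement6 {Ω 𝓩 : Type*} [MeasurableSpace Ω] [MeasurableSpace 𝓩]
    (μ : Measure Ω) [IsProbabilityMeasure μ]
    (Y D : Ω → ℝ) (Z : Ω → 𝓩) (g0 g1 h0 h1 m0 : 𝓩 → ℝ) (ε : ℝ) (hε : 0 < ε)
    (hY : Measurable Y) (hD : Measurable D) (hZ : Measurable Z)
    (hg0 : Measurable g0) (hg1 : Measurable g1) (hm0 : Measurable m0)
    (hh0 : Measurable h0) (hh1 : Measurable h1)
    (hDbin : ∀ ω, D ω = 0 ∨ D ω = 1)
    -- `g₀(d,Z) = E[Y ∣ D = d, Z]`: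
    (hζ : μ[fun ω => Y ω - (D ω * g1 (Z ω) + (1 - D ω) * g0 (Z ω)) |
        MeasurableSpace.comap (fun ω => (D ω, Z ω)) inferInstance] =ᵐ[μ] 0)
    -- `m₀(Z) = E[D ∣ Z]`:
    (hm : μ[D | MeasurableSpace.comap Z inferInstance] =ᵐ[μ] fun ω => m0 (Z ω))
    (hover : ∀ᵐ ω ∂μ, ε ≤ m0 (Z ω) ∧ m0 (Z ω) ≤ 1 - ε)
    -- square-integrable directions and moments:
    (hYL2 : MemLp Y 2 μ) (hg0L2 : MemLp (fun ω => g0 (Z ω)) 2 μ)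
    (hg1L2 : MemLp (fun ω => g1 (Z ω)) 2 μ)
    (hh0L2 : MemLp (fun ω => h0 (Z ω)) 2 μ)
    (hh1L2 : MemLp (fun ω => h1 (Z ω)) 2 μ)
    -- integrability of the score along the path:
    (hint : ∀ t : ℝ, Integrable (fun ω =>
        ((g1 (Z ω) + t * h1 (Z ω)) - (g0 (Z ω) + t * h0 (Z ω)))
        + D ω * (Y ω - (g1 (Z ω) + t * h1 (Z ω))) / m0 (Z ω)
        - (1 - D ω) * (Y ω - (g0 (Z ω) + t * h0 (Z ω))) / (1 - m0 (Z ω))) μ) :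
    HasDerivAt (fun t : ℝ => ∫ ω,
        (((g1 (Z ω) + t * h1 (Z ω)) - (g0 (Z ω) + t * h0 (Z ω)))
        + D ω * (Y ω - (g1 (Z ω) + t * h1 (Z ω))) / m0 (Z ω)
        - (1 - D ω) * (Y ω - (g0 (Z ω) + t * h0 (Z ω))) / (1 - m0 (Z ω))
        - (∫ ω', (g1 (Z ω') - g0 (Z ω')) ∂μ)) ∂μ) 0 0 :=
  statement6_general μ Y D Z g0 g1 h0 h1 m0 ε hε hD hZ hm0 hh0 hh1 hDbin hm hover hh0L2 hh1L2 hint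
end

section
/- Product-bias bound: under the conditions of the exact bias formula, |E[ψ(W; θ₀, ĝ, m̂)]| ≤ (2/ε) · max_{d∈{0,1}} ‖ĝ(d,Z) − g₀(d,Z)‖_{L²} · ‖m̂(Z) − m₀(Z)‖_{L²}. -/
/-!
Pointwise, the centred score splits as
`((g₁ − g₀)(Z) − θ₀) + B + w(D, m̂(Z)) · (Y − g_D(Z)) + h(Z) · (D − m₀(Z))` with
`w(d, m) = d/m − (1 − d)/(1 − m)`, `h = (g₁ − ĝ₁)/m̂ + (g₀ − ĝ₀)/(1 − m̂)` and
`B = (ĝ₁ − g₁)(m̂ − m₀)/m̂ + (ĝ₀ − g₀)(m̂ − m₀)/(1 − m̂)`.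
The first term is centred, and the last two have mean zero because their residual factors have
conditional mean zero given `(D, Z)` and given `Z` respectively; hence `E ψ = E B`. As `m̂` and
`1 − m̂` are at least `ε`, Cauchy–Schwarz bounds each half of `E |B|` by
`ε⁻¹ ‖ĝ_d − g_d‖ ‖m̂ − m₀‖`.
-/

open MeasureTheory ProbabilityTheory

section Lp

variable {Ω : Type*} {mΩ : MeasurableSpace Ω} {μ : Measure Ω}

theorem abs_div_le_inv_mul_abs {x d ε : ℝ} (hε : 0 < ε) (hd : ε ≤ d) : |x / d| ≤ ε⁻¹ * |x| := by
  rw [abs_div, abs_of_pos (hε.trans_le hd), div_eq_inv_mul]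
  gcongr

theorem MeasureTheory.MemLp.div_of_le {p : ENNReal} {f g : Ω → ℝ} {ε : ℝ} (hf : MemLp f p μ)
    (hg : AEMeasurable g μ) (hε : 0 < ε) (hgε : ∀ᵐ ω ∂μ, ε ≤ g ω) :
    MemLp (fun ω => f ω / g ω) p μ :=
  hf.of_le_mul (hf.1.aemeasurable.div hg).aestronglyMeasurable <| by
    filter_upwards [hgε] with ω h
    simpa only [Real.norm_eq_abs] using abs_div_le_inv_mul_abs hε h

theorem integral_abs_mul_le_sqrt_mul_sqrt {f g : Ω → ℝ} (hf : MemLp f 2 μ) (hg : MemLp g 2 μ) :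
    ∫ ω, |f ω * g ω| ∂μ ≤ √(∫ ω, f ω ^ 2 ∂μ) * √(∫ ω, g ω ^ 2 ∂μ) := by
  have h2 : ENNReal.ofReal 2 = 2 := by norm_num
  have := integral_mul_norm_le_Lp_mul_Lq Real.HolderConjugate.two_two (h2 ▸ hf) (h2 ▸ hg)
  simpa [Real.sqrt_eq_rpow, Real.norm_eq_abs, abs_mul, sq_abs] using this

theorem integral_mul_eq_zero_of_condExp_eq_zero [IsFiniteMeasure μ] {m : MeasurableSpace Ω}
    (hm : m ≤ mΩ) {f g : Ω → ℝ} (hf : StronglyMeasurable[m] f) (hfg : Integrable (f * g) μ)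
    (hg : Integrable g μ) (hg0 : μ[g|m] =ᵐ[μ] 0) : ∫ ω, f ω * g ω ∂μ = 0 := by
  have : IsFiniteMeasure (μ.trim hm) := isFiniteMeasure_trim hm
  calc ∫ ω, f ω * g ω ∂μ = ∫ ω, μ[f * g|m] ω ∂μ := (integral_condExp hm).symm
    _ = ∫ ω, f ω * μ[g|m] ω ∂μ :=
        integral_congr_ae (condExp_mul_of_stronglyMeasurable_left hf hfg hg)
    _ = 0 := integral_eq_zero_of_ae <| by
        filter_upwards [hg0] with ω h
        simp [h]

theorem condExp_sub_eq_zero_of_condExp_eq [IsFiniteMeasure μ] {m : MeasurableSpace Ω}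
    (hm : m ≤ mΩ) {f g : Ω → ℝ} (hf : Integrable f μ) (hg : StronglyMeasurable[m] g)
    (hgi : Integrable g μ) (hfg : μ[f|m] =ᵐ[μ] g) : μ[f - g|m] =ᵐ[μ] 0 := by
  have : IsFiniteMeasure (μ.trim hm) := isFiniteMeasure_trim hm
  filter_upwards [condExp_sub hf hgi m, hfg] with ω h₁ h₂
  rw [h₁, Pi.sub_apply, h₂, condExp_of_stronglyMeasurable hm hg hgi, sub_self, Pi.zero_apply]

theorem abs_integral_bias_le {p q₁ q₀ b : Ω → ℝ} {ε : ℝ} (hε : 0 < ε)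
    (hp : ∀ᵐ ω ∂μ, ε ≤ p ω ∧ p ω ≤ 1 - ε)
    (hq₁ : MemLp q₁ 2 μ) (hq₀ : MemLp q₀ 2 μ) (hb : MemLp b 2 μ) :
    |∫ ω, (q₁ ω * b ω / p ω + q₀ ω * b ω / (1 - p ω)) ∂μ|
      ≤ 2 / ε * max √(∫ ω, q₁ ω ^ 2 ∂μ) √(∫ ω, q₀ ω ^ 2 ∂μ) * √(∫ ω, b ω ^ 2 ∂μ) := by
  set S₁ := √(∫ ω, q₁ ω ^ 2 ∂μ)
  set S₀ := √(∫ ω, q₀ ω ^ 2 ∂μ)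
  set Nb := √(∫ ω, b ω ^ 2 ∂μ)
  have hpt : ∀ᵐ ω ∂μ, |q₁ ω * b ω / p ω + q₀ ω * b ω / (1 - p ω)|
      ≤ ε⁻¹ * (|q₁ ω * b ω| + |q₀ ω * b ω|) := by
    filter_upwards [hp] with ω ⟨h₁, h₀⟩
    calc _ ≤ |q₁ ω * b ω / p ω| + |q₀ ω * b ω / (1 - p ω)| := abs_add_le _ _
      _ ≤ ε⁻¹ * |q₁ ω * b ω| + ε⁻¹ * |q₀ ω * b ω| :=
          add_le_add (abs_div_le_inv_mul_abs hε h₁) (abs_div_le_inv_mul_abs hε (by linarith))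
      _ = _ := by ring
  have hint₁ : Integrable (fun ω => |q₁ ω * b ω|) μ := (hq₁.integrable_mul hb).abs
  have hint₀ : Integrable (fun ω => |q₀ ω * b ω|) μ := (hq₀.integrable_mul hb).abs
  calc _ ≤ ∫ ω, |q₁ ω * b ω / p ω + q₀ ω * b ω / (1 - p ω)| ∂μ := abs_integral_le_integral_abs
    _ ≤ ∫ ω, ε⁻¹ * (|q₁ ω * b ω| + |q₀ ω * b ω|) ∂μ :=
        integral_mono_of_nonneg (ae_of_all _ fun _ => abs_nonneg _)
          ((hint₁.add hint₀).const_mul _) hpt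
    _ = ε⁻¹ * (∫ ω, |q₁ ω * b ω| ∂μ + ∫ ω, |q₀ ω * b ω| ∂μ) := by
        rw [integral_const_mul, integral_add hint₁ hint₀]
    _ ≤ ε⁻¹ * (S₁ * Nb + S₀ * Nb) := by
        gcongr
        exacts [integral_abs_mul_le_sqrt_mul_sqrt hq₁ hb, integral_abs_mul_le_sqrt_mul_sqrt hq₀ hb]
    _ ≤ ε⁻¹ * (max S₁ S₀ * Nb + max S₁ S₀ * Nb) := by
        gcongr
        exacts [le_max_left _ _, le_max_right _ _]
    _ = 2 / ε * max S₁ S₀ * Nb := by ring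

theorem integrable_bias {p q₁ q₀ b : Ω → ℝ} {ε : ℝ} (hε : 0 < ε) (hpm : AEMeasurable p μ)
    (hp : ∀ᵐ ω ∂μ, ε ≤ p ω ∧ p ω ≤ 1 - ε)
    (hq₁ : MemLp q₁ 2 μ) (hq₀ : MemLp q₀ 2 μ) (hb : MemLp b 2 μ) :
    Integrable (fun ω => q₁ ω * b ω / p ω + q₀ ω * b ω / (1 - p ω)) μ := by
  have h₁ : MemLp (fun ω => q₁ ω * b ω) 1 μ := memLp_one_iff_integrable.mpr (hq₁.integrable_mul hb)
  have h₀ : MemLp (fun ω => q₀ ω * b ω) 1 μ := memLp_one_iff_integrable.mpr (hq₀.integrable_mul hb)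
  refine memLp_one_iff_integrable.mp ((h₁.div_of_le hpm hε ?_).add
    (h₀.div_of_le (aemeasurable_const.sub hpm) hε ?_))
  · exact hp.mono fun _ h => h.1
  · exact hp.mono fun _ h => by linarith [h.2]

end Lp

noncomputable def ipwWeight (d m : ℝ) : ℝ := d / m - (1 - d) / (1 - m)

theorem abs_ipwWeight_le {d m ε : ℝ} (hε : 0 < ε) (hd : d = 0 ∨ d = 1)
    (hm : ε ≤ m ∧ m ≤ 1 - ε) : |ipwWeight d m| ≤ ε⁻¹ := by
  rcases hd with rfl | rfl
  · simpa [ipwWeight] using abs_div_le_inv_mul_abs (x := 1) hε (by linarith : ε ≤ 1 - m)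
  · simpa [ipwWeight] using abs_div_le_inv_mul_abs (x := 1) hε hm.1

theorem aipw_score_decomposition {y d g₁ g₀ ĝ₁ ĝ₀ m₀ m θ : ℝ} (hd : d = 0 ∨ d = 1)
    (hm : m ≠ 0) (hm' : 1 - m ≠ 0) :
    (ĝ₁ - ĝ₀) + d * (y - ĝ₁) / m - (1 - d) * (y - ĝ₀) / (1 - m) - θ
      = (g₁ - g₀ - θ) + ((ĝ₁ - g₁) * (m - m₀) / m + (ĝ₀ - g₀) * (m - m₀) / (1 - m))
        + ipwWeight d m * (y - (d * g₁ + (1 - d) * g₀))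
        + ((g₁ - ĝ₁) / m + (g₀ - ĝ₀) / (1 - m)) * (d - m₀) := by
  rcases hd with rfl | rfl <;> simp only [ipwWeight] <;> field_simp <;> ring

section AIPW

variable {Ω 𝓩 : Type*} {mΩ : MeasurableSpace Ω} [MeasurableSpace 𝓩] {μ : Measure Ω}
  {D : Ω → ℝ} {Z : Ω → 𝓩}

theorem integrable_ipwWeight_mul {p : 𝓩 → ℝ} {ζ : Ω → ℝ} {ε : ℝ} (hε : 0 < ε)
    (hD : Measurable D) (hZ : Measurable Z) (hp : Measurable p)
    (hDbin : ∀ ω, D ω = 0 ∨ D ω = 1) (hpε : ∀ᵐ ω ∂μ, ε ≤ p (Z ω) ∧ p (Z ω) ≤ 1 - ε)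
    (hζ : Integrable ζ μ) : Integrable (fun ω => ipwWeight (D ω) (p (Z ω)) * ζ ω) μ :=
  hζ.bdd_mul (by unfold ipwWeight; fun_prop) <| by
    filter_upwards [hpε] with ω h
    exact abs_ipwWeight_le hε (hDbin ω) h

theorem integral_ipwWeight_mul_eq_zero [IsFiniteMeasure μ] {p : 𝓩 → ℝ} {ζ : Ω → ℝ} {ε : ℝ}
    (hε : 0 < ε) (hD : Measurable D) (hZ : Measurable Z) (hp : Measurable p)
    (hDbin : ∀ ω, D ω = 0 ∨ D ω = 1) (hpε : ∀ᵐ ω ∂μ, ε ≤ p (Z ω) ∧ p (Z ω) ≤ 1 - ε)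
    (hζ : Integrable ζ μ)
    (hζ0 : μ[ζ | MeasurableSpace.comap (fun ω => (D ω, Z ω)) inferInstance] =ᵐ[μ] 0) :
    ∫ ω, ipwWeight (D ω) (p (Z ω)) * ζ ω ∂μ = 0 := by
  have hw : Measurable fun x : ℝ × 𝓩 => ipwWeight x.1 (p x.2) := by unfold ipwWeight; fun_prop
  exact integral_mul_eq_zero_of_condExp_eq_zero (hD.prodMk hZ).comap_le
    (hw.comp (comap_measurable _)).stronglyMeasurable
    (integrable_ipwWeight_mul hε hD hZ hp hDbin hpε hζ) hζ hζ0

theorem integral_comp_mul_sub_condExp_eq_zero [IsFiniteMeasure μ] {h m₀ : 𝓩 → ℝ}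
    (hZ : Measurable Z) (hh : Measurable h) (hm₀ : Measurable m₀)
    (hhL2 : MemLp (fun ω => h (Z ω)) 2 μ) (hDL2 : MemLp D 2 μ)
    (hm₀L2 : MemLp (fun ω => m₀ (Z ω)) 2 μ)
    (hm : μ[D | MeasurableSpace.comap Z inferInstance] =ᵐ[μ] fun ω => m₀ (Z ω)) :
    ∫ ω, h (Z ω) * (D ω - m₀ (Z ω)) ∂μ = 0 :=
  integral_mul_eq_zero_of_condExp_eq_zero hZ.comap_le
    (hh.comp (comap_measurable Z)).stronglyMeasurable (hhL2.integrable_mul (hDL2.sub hm₀L2))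
    ((hDL2.sub hm₀L2).integrable one_le_two)
    (condExp_sub_eq_zero_of_condExp_eq hZ.comap_le (hDL2.integrable one_le_two)
      (hm₀.comp (comap_measurable Z)).stronglyMeasurable (hm₀L2.integrable one_le_two) hm)

theorem integral_aipw_score_eq_integral_bias [IsProbabilityMeasure μ] {Y : Ω → ℝ}
    {g0 g1 ghat0 ghat1 m0 mhat : 𝓩 → ℝ} {ε : ℝ} (hε : 0 < ε)
    (hD : Measurable D) (hZ : Measurable Z)
    (hg0 : Measurable g0) (hg1 : Measurable g1) (hm0 : Measurable m0)
    (hghat0 : Measurable ghat0) (hghat1 : Measurable ghat1) (hmhat : Measurable mhat)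
    (hDbin : ∀ ω, D ω = 0 ∨ D ω = 1)
    (hζ : μ[fun ω => Y ω - (D ω * g1 (Z ω) + (1 - D ω) * g0 (Z ω)) |
        MeasurableSpace.comap (fun ω => (D ω, Z ω)) inferInstance] =ᵐ[μ] 0)
    (hm : μ[D | MeasurableSpace.comap Z inferInstance] =ᵐ[μ] fun ω => m0 (Z ω))
    (hhatover : ∀ᵐ ω ∂μ, ε ≤ mhat (Z ω) ∧ mhat (Z ω) ≤ 1 - ε)
    (hYL2 : MemLp Y 2 μ) (hg0L2 : MemLp (fun ω => g0 (Z ω)) 2 μ)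
    (hg1L2 : MemLp (fun ω => g1 (Z ω)) 2 μ)
    (hghat0L2 : MemLp (fun ω => ghat0 (Z ω)) 2 μ)
    (hghat1L2 : MemLp (fun ω => ghat1 (Z ω)) 2 μ)
    (hm0L2 : MemLp (fun ω => m0 (Z ω)) 2 μ) :
    ∫ ω, ((ghat1 (Z ω) - ghat0 (Z ω))
        + D ω * (Y ω - ghat1 (Z ω)) / mhat (Z ω)
        - (1 - D ω) * (Y ω - ghat0 (Z ω)) / (1 - mhat (Z ω))
        - (∫ ω', (g1 (Z ω') - g0 (Z ω')) ∂μ)) ∂μ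
      = ∫ ω, ((ghat1 (Z ω) - g1 (Z ω)) * (mhat (Z ω) - m0 (Z ω)) / mhat (Z ω)
          + (ghat0 (Z ω) - g0 (Z ω)) * (mhat (Z ω) - m0 (Z ω)) / (1 - mhat (Z ω))) ∂μ := by
  set θ := ∫ ω, (g1 (Z ω) - g0 (Z ω)) ∂μ
  have hp : AEMeasurable (fun ω => mhat (Z ω)) μ := (hmhat.comp hZ).aemeasurable
  have hp₁ : ∀ᵐ ω ∂μ, ε ≤ mhat (Z ω) := hhatover.mono fun _ h => h.1
  have hp₀ : ∀ᵐ ω ∂μ, ε ≤ 1 - mhat (Z ω) := hhatover.mono fun _ h => by linarith [h.2]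
  have hDL2 : MemLp D 2 μ := memLp_of_bounded (a := 0) (b := 1)
    (ae_of_all _ fun ω => by rcases hDbin ω with h | h <;> simp [h]) hD.aestronglyMeasurable 2
  have hbL2 : MemLp (fun ω => mhat (Z ω) - m0 (Z ω)) 2 μ :=
    (memLp_of_bounded (hhatover.mono fun _ h => ⟨h.1, h.2⟩) hp.aestronglyMeasurable 2).sub hm0L2
  have hc : Integrable (fun ω => g1 (Z ω) - g0 (Z ω)) μ := (hg1L2.sub hg0L2).integrable one_le_two
  have hcentered : ∫ ω, (g1 (Z ω) - g0 (Z ω) - θ) ∂μ = 0 := by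
    rw [integral_sub hc (integrable_const θ)]
    simp [θ]
  have hbias := integrable_bias hε hp hhatover (hghat1L2.sub hg1L2) (hghat0L2.sub hg0L2) hbL2
  have hζint : Integrable (fun ω => Y ω - (D ω * g1 (Z ω) + (1 - D ω) * g0 (Z ω))) μ :=
    (hYL2.integrable one_le_two).sub ((hDL2.integrable_mul hg1L2).add
      (((memLp_const 1).sub hDL2).integrable_mul hg0L2))
  have hvL2 : MemLp (fun ω => (g1 (Z ω) - ghat1 (Z ω)) / mhat (Z ω)
      + (g0 (Z ω) - ghat0 (Z ω)) / (1 - mhat (Z ω))) 2 μ :=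
    ((hg1L2.sub hghat1L2).div_of_le hp hε hp₁).add
      ((hg0L2.sub hghat0L2).div_of_le (aemeasurable_const.sub hp) hε hp₀)
  have hu := integrable_ipwWeight_mul hε hD hZ hmhat hDbin hhatover hζint
  have hvW := hvL2.integrable_mul (hDL2.sub hm0L2)
  have hc' := hc.sub (integrable_const θ)
  have hdecomp := fun ω (h : ε ≤ mhat (Z ω) ∧ mhat (Z ω) ≤ 1 - ε) =>
    aipw_score_decomposition (y := Y ω) (g₁ := g1 (Z ω)) (g₀ := g0 (Z ω)) (ĝ₁ := ghat1 (Z ω))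
      (ĝ₀ := ghat0 (Z ω)) (m₀ := m0 (Z ω)) (θ := θ) (hDbin ω) (by linarith) (by linarith)
  rw [integral_congr_ae (hhatover.mono hdecomp), integral_add, integral_add, integral_add,
    integral_ipwWeight_mul_eq_zero hε hD hZ hmhat hDbin hhatover hζint hζ,
    integral_comp_mul_sub_condExp_eq_zero
      (h := fun z => (g1 z - ghat1 z) / mhat z + (g0 z - ghat0 z) / (1 - mhat z))
      hZ (by fun_prop) hm0 hvL2 hDL2 hm0L2 hm,
    hcentered, zero_add, add_zero, add_zero]
  exacts [hc', hbias, hc'.add hbias, hu, (hc'.add hbias).add hu, hvW]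

end AIPW

theorem statement9_general {Ω 𝓩 : Type*} [MeasurableSpace Ω] [MeasurableSpace 𝓩]
    (μ : Measure Ω) [IsProbabilityMeasure μ]
    (Y D : Ω → ℝ) (Z : Ω → 𝓩) (g0 g1 ghat0 ghat1 m0 mhat : 𝓩 → ℝ) (ε : ℝ) (hε : 0 < ε)
    (hD : Measurable D) (hZ : Measurable Z)
    (hg0 : Measurable g0) (hg1 : Measurable g1) (hm0 : Measurable m0)
    (hghat0 : Measurable ghat0) (hghat1 : Measurable ghat1) (hmhat : Measurable mhat)
    (hDbin : ∀ ω, D ω = 0 ∨ D ω = 1)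
    -- `g₀(d,Z) = E[Y ∣ D = d, Z]`:
    (hζ : μ[fun ω => Y ω - (D ω * g1 (Z ω) + (1 - D ω) * g0 (Z ω)) |
        MeasurableSpace.comap (fun ω => (D ω, Z ω)) inferInstance] =ᵐ[μ] 0)
    -- `m₀(Z) = E[D ∣ Z]`:
    (hm : μ[D | MeasurableSpace.comap Z inferInstance] =ᵐ[μ] fun ω => m0 (Z ω))
    -- `m̂` bounded in `[ε, 1−ε]`:
    (hhatover : ∀ᵐ ω ∂μ, ε ≤ mhat (Z ω) ∧ mhat (Z ω) ≤ 1 - ε)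
    -- square integrability:
    (hYL2 : MemLp Y 2 μ) (hg0L2 : MemLp (fun ω => g0 (Z ω)) 2 μ)
    (hg1L2 : MemLp (fun ω => g1 (Z ω)) 2 μ)
    (hghat0L2 : MemLp (fun ω => ghat0 (Z ω)) 2 μ)
    (hghat1L2 : MemLp (fun ω => ghat1 (Z ω)) 2 μ)
    (hm0L2 : MemLp (fun ω => m0 (Z ω)) 2 μ) :
    |∫ ω, ((ghat1 (Z ω) - ghat0 (Z ω))
        + D ω * (Y ω - ghat1 (Z ω)) / mhat (Z ω)
        - (1 - D ω) * (Y ω - ghat0 (Z ω)) / (1 - mhat (Z ω))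
        - (∫ ω', (g1 (Z ω') - g0 (Z ω')) ∂μ)) ∂μ|
      ≤ (2 / ε)
        * max (Real.sqrt (∫ ω, (ghat1 (Z ω) - g1 (Z ω)) ^ 2 ∂μ))
              (Real.sqrt (∫ ω, (ghat0 (Z ω) - g0 (Z ω)) ^ 2 ∂μ))
        * Real.sqrt (∫ ω, (mhat (Z ω) - m0 (Z ω)) ^ 2 ∂μ) := by
  rw [integral_aipw_score_eq_integral_bias hε hD hZ hg0 hg1 hm0 hghat0 hghat1 hmhat hDbin hζ hm
    hhatover hYL2 hg0L2 hg1L2 hghat0L2 hghat1L2 hm0L2]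
  have hmhatL2 : MemLp (fun ω => mhat (Z ω)) 2 μ :=
    memLp_of_bounded (hhatover.mono fun _ h => ⟨h.1, h.2⟩) (hmhat.comp hZ).aestronglyMeasurable 2
  exact abs_integral_bias_le hε hhatover (hghat1L2.sub hg1L2) (hghat0L2.sub hg0L2)
    (hmhatL2.sub hm0L2)

/-- Product-bias bound for the AIPW ATE score:
`|E[ψ(W; θ₀, ĝ, m̂)]| ≤ (2/ε) · max_d ‖ĝ(d,Z) − g₀(d,Z)‖_{L²} · ‖m̂(Z) − m₀(Z)‖_{L²}`. -/
theorem statement9 {Ω 𝓩 : Type*} [MeasurableSpace Ω] [MeasurableSpace 𝓩]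
    (μ : Measure Ω) [IsProbabilityMeasure μ]
    (Y D : Ω → ℝ) (Z : Ω → 𝓩) (g0 g1 ghat0 ghat1 m0 mhat : 𝓩 → ℝ) (ε : ℝ) (hε : 0 < ε)
    (hY : Measurable Y) (hD : Measurable D) (hZ : Measurable Z)
    (hg0 : Measurable g0) (hg1 : Measurable g1) (hm0 : Measurable m0)
    (hghat0 : Measurable ghat0) (hghat1 : Measurable ghat1) (hmhat : Measurable mhat)
    (hDbin : ∀ ω, D ω = 0 ∨ D ω = 1)
    -- `g₀(d,Z) = E[Y ∣ D = d, Z]`: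
    (hζ : μ[fun ω => Y ω - (D ω * g1 (Z ω) + (1 - D ω) * g0 (Z ω)) |
        MeasurableSpace.comap (fun ω => (D ω, Z ω)) inferInstance] =ᵐ[μ] 0)
    -- `m₀(Z) = E[D ∣ Z]`:
    (hm : μ[D | MeasurableSpace.comap Z inferInstance] =ᵐ[μ] fun ω => m0 (Z ω))
    -- `m̂` bounded in `[ε, 1−ε]`:
    (hhatover : ∀ᵐ ω ∂μ, ε ≤ mhat (Z ω) ∧ mhat (Z ω) ≤ 1 - ε)
    -- square integrability:
    (hYL2 : MemLp Y 2 μ) (hg0L2 : MemLp (fun ω => g0 (Z ω)) 2 μ)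
    (hg1L2 : MemLp (fun ω => g1 (Z ω)) 2 μ)
    (hghat0L2 : MemLp (fun ω => ghat0 (Z ω)) 2 μ)
    (hghat1L2 : MemLp (fun ω => ghat1 (Z ω)) 2 μ)
    (hm0L2 : MemLp (fun ω => m0 (Z ω)) 2 μ) :
    |∫ ω, ((ghat1 (Z ω) - ghat0 (Z ω))
        + D ω * (Y ω - ghat1 (Z ω)) / mhat (Z ω)
        - (1 - D ω) * (Y ω - ghat0 (Z ω)) / (1 - mhat (Z ω))
        - (∫ ω', (g1 (Z ω') - g0 (Z ω')) ∂μ)) ∂μ|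
      ≤ (2 / ε)
        * max (Real.sqrt (∫ ω, (ghat1 (Z ω) - g1 (Z ω)) ^ 2 ∂μ))
              (Real.sqrt (∫ ω, (ghat0 (Z ω) - g0 (Z ω)) ^ 2 ∂μ))
        * Real.sqrt (∫ ω, (mhat (Z ω) - m0 (Z ω)) ^ 2 ∂μ) :=
  statement9_general μ Y D Z g0 g1 ghat0 ghat1 m0 mhat ε hε hD hZ hg0 hg1 hm0 hghat0 hghat1 hmhat
    hDbin hζ hm hhatover hYL2 hg0L2 hg1L2 hghat0L2 hghat1L2 hm0L2
end
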